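/- Let (E, L, E) be a labeled space with E the smallest non-degenerate accommodating set. Suppose (E, L, E) is strongly cofinal and every B ∈ E \ E_reg lies in H(A) for every nonempty A ∈ E. Then (E, L, E) is minimal (the only hereditary saturated subsets of E are {∅} and E). -/

import Mathlib

universe u v

variable {V : Type u} {Λ : Type v}

/-- The relative range `r(S, α)` of a set of vertices along a labeled path. -/
def relRange (Edge : V → Λ → V → Prop) : Set V → List Λ → Set V
  | S, [] => S
  | S, a :: α => relRange Edge {w | ∃ u ∈ S, Edge u a w} α

/-- The range `r(α)` of a labeled path. -/
def lrange (Edge : V → Λ → V → Prop) (α : List Λ) : Set V :=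
  relRange Edge Set.univ α

/-- `α` is a (nonempty) labeled path of the labeled graph. -/
def IsLP (Edge : V → Λ → V → Prop) (α : List Λ) : Prop :=
  α ≠ [] ∧ (lrange Edge α).Nonempty

/-- `L(SE¹)`: labels of edges emitted from `S`. -/
def edgeLabels (Edge : V → Λ → V → Prop) (S : Set V) : Set Λ :=
  {a | ∃ u ∈ S, ∃ w, Edge u a w}

/-- `S` is regular: every nonempty `B ∈ ℬ` with `B ⊆ S` emits a finite nonzero set of labels. -/
def RegularSet (Edge : V → Λ → V → Prop) (ℬ : Set (Set V)) (S : Set V) : Prop :=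
  ∀ B ∈ ℬ, B ⊆ S → B.Nonempty →
    (edgeLabels Edge B).Finite ∧ (edgeLabels Edge B).Nonempty

/-- `H ⊆ ℬ` is hereditary. -/
def Hered (Edge : V → Λ → V → Prop) (ℬ H : Set (Set V)) : Prop :=
  H ⊆ ℬ ∧ (∀ A ∈ H, ∀ α : List Λ, IsLP Edge α → relRange Edge A α ∈ H) ∧
    (∀ A ∈ H, ∀ B ∈ H, A ∪ B ∈ H) ∧ (∀ A ∈ H, ∀ B ∈ ℬ, B ⊆ A → B ∈ H)

/-- `H` is saturated. -/
def Satur (Edge : V → Λ → V → Prop) (ℬ H : Set (Set V)) : Prop :=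
  ∀ A ∈ ℬ, RegularSet Edge ℬ A →
    (∀ α : List Λ, IsLP Edge α → relRange Edge A α ∈ H) → A ∈ H

/-- `H(A)`: sets covered by finitely many relative ranges `r(A, αᵢ)`, `αᵢ ∈ L^#(E)`. -/
def HSet (Edge : V → Λ → V → Prop) (ℬ : Set (Set V)) (A : Set V) : Set (Set V) :=
  {B ∈ ℬ | ∃ l : List (List Λ), (∀ α ∈ l, α = [] ∨ IsLP Edge α) ∧
    B ⊆ ⋃ α ∈ l, relRange Edge A α}

/-- `S(H(A))`: the saturation of `H(A)`. -/
def SHSet (Edge : V → Λ → V → Prop) (ℬ : Set (Set V)) (A : Set V) : Set (Set V) :=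
  {B ∈ ℬ | ∃ n : ℕ,
    (∀ β : List Λ, (β = [] ∨ IsLP Edge β) → β.length = n →
      relRange Edge B β ∈ HSet Edge ℬ A) ∧
    (∀ γ : List Λ, (γ = [] ∨ IsLP Edge γ) → γ.length < n →
      ∃ C ∈ HSet Edge ℬ A, ∃ D ∈ ℬ, RegularSet Edge ℬ D ∧ relRange Edge B γ = C ∪ D)}

/-- `ℬ` is an accommodating set for the labeled graph. -/
def Accommodating (Edge : V → Λ → V → Prop) (ℬ : Set (Set V)) : Prop :=
  (∀ α : List Λ, IsLP Edge α → lrange Edge α ∈ ℬ) ∧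
    (∀ A ∈ ℬ, ∀ α : List Λ, IsLP Edge α → relRange Edge A α ∈ ℬ) ∧
    (∀ A ∈ ℬ, ∀ B ∈ ℬ, A ∪ B ∈ ℬ) ∧ (∀ A ∈ ℬ, ∀ B ∈ ℬ, A ∩ B ∈ ℬ)

/-- `ℬ` is non-degenerate: closed under relative complements (and contains `∅`). -/
def NonDegenerate (ℬ : Set (Set V)) : Prop :=
  (∅ : Set V) ∈ ℬ ∧ ∀ A ∈ ℬ, ∀ B ∈ ℬ, A \ B ∈ ℬ

/-- The labeled space is weakly left-resolving. -/
def WLR (Edge : V → Λ → V → Prop) (ℬ : Set (Set V)) : Prop :=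
  ∀ A ∈ ℬ, ∀ B ∈ ℬ, ∀ α : List Λ, IsLP Edge α →
    relRange Edge (A ∩ B) α = relRange Edge A α ∩ relRange Edge B α

/-- `ℬ` is the smallest non-degenerate accommodating set. -/
def SmallestAccom (Edge : V → Λ → V → Prop) (ℬ : Set (Set V)) : Prop :=
  Accommodating Edge ℬ ∧ NonDegenerate ℬ ∧
    ∀ ℬ' : Set (Set V), Accommodating Edge ℬ' → NonDegenerate ℬ' → ℬ ⊆ ℬ'

/-- `x_{[1,n]}`: the length-`n` prefix of an infinite word. -/
def wordPrefix (x : ℕ → Λ) (n : ℕ) : List Λ := List.ofFn fun i : Fin n => x i.val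

/-- `x` lies in the closure of `L(E^∞)`: all finite prefixes are labeled paths. -/
def InfWord (Edge : V → Λ → V → Prop) (x : ℕ → Λ) : Prop :=
  ∀ n : ℕ, 1 ≤ n → IsLP Edge (wordPrefix x n)

/-- Strong cofinality of a labeled space. -/
def StrCofinal (Edge : V → Λ → V → Prop) (ℬ : Set (Set V)) : Prop :=
  ∀ A ∈ ℬ, A.Nonempty → ∀ x : ℕ → Λ, InfWord Edge x →
    ∃ N : ℕ, 1 ≤ N ∧ ∃ l : List (List Λ), (∀ α ∈ l, IsLP Edge α) ∧
      lrange Edge (wordPrefix x N) ⊆ ⋃ α ∈ l, relRange Edge A α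

/-- Minimality: the only hereditary saturated subsets of `ℬ` are `{∅}` and `ℬ`. -/
def MinimalLS (Edge : V → Λ → V → Prop) (ℬ : Set (Set V)) : Prop :=
  ∀ H : Set (Set V), Hered Edge ℬ H → Satur Edge ℬ H → H ⊆ {∅} ∨ H = ℬ

/-- `L(SEⁿ)`: labels of paths of length `n` with source in `S`. -/
def labelsOfLen (Edge : V → Λ → V → Prop) (S : Set V) (n : ℕ) : Set (List Λ) :=
  {β | β.length = n ∧ (relRange Edge S β).Nonempty}

/-- The labeled space is disagreeable. -/
def Disagreeable (Edge : V → Λ → V → Prop) (ℬ : Set (Set V)) : Prop :=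
  ∀ A ∈ ℬ, A.Nonempty → ∀ β : List Λ, IsLP Edge β →
    ∃ n : ℕ, 1 ≤ n ∧ labelsOfLen Edge A (β.length * n) ≠ {(List.replicate n β).flatten}

/-- `(α, A)` is a cycle. -/
def IsCycle (Edge : V → Λ → V → Prop) (ℬ : Set (Set V)) (α : List Λ) (A : Set V) : Prop :=
  IsLP Edge α ∧ A ∈ ℬ ∧ A.Nonempty ∧ ∀ B ∈ ℬ, B ⊆ A → relRange Edge B α = B

/-- The cycle `(α, A)` has an exit. -/
def CycleHasExit (Edge : V → Λ → V → Prop) (ℬ : Set (Set V)) (α : List Λ) (A : Set V) : Prop :=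
  ∃ t : ℕ, 1 ≤ t ∧ t ≤ α.length ∧ ∃ B ∈ ℬ, B.Nonempty ∧
    B ⊆ relRange Edge A (α.take t) ∧
    edgeLabels Edge B ≠ {a : Λ | α[t % α.length]? = some a}

/-- The cycle `(α, A)` has no exits. -/
def CycleNoExit (Edge : V → Λ → V → Prop) (ℬ : Set (Set V)) (α : List Λ) (A : Set V) : Prop :=
  ∀ t : ℕ, 1 ≤ t → t ≤ α.length → ∀ B ∈ ℬ, B.Nonempty →
    B ⊆ relRange Edge A (α.take t) →
    RegularSet Edge ℬ B ∧ edgeLabels Edge B = {a : Λ | α[t % α.length]? = some a}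

/-- Condition (L): every cycle has an exit. -/
def CondL (Edge : V → Λ → V → Prop) (ℬ : Set (Set V)) : Prop :=
  ∀ (α : List Λ) (A : Set V), IsCycle Edge ℬ α A → CycleHasExit Edge ℬ α A

/-- `α` is a loop at `A`. -/
def IsLoop (Edge : V → Λ → V → Prop) (α : List Λ) (A : Set V) : Prop :=
  IsLP Edge α ∧ A ⊆ relRange Edge A α

/-- The loop `(α, A)` has an exit. -/
def LoopHasExit (Edge : V → Λ → V → Prop) (α : List Λ) (A : Set V) : Prop :=
  {β : List Λ | ∃ k : ℕ, 1 ≤ k ∧ k ≤ α.length ∧ β = α.take k} ⊂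
      {β : List Λ | 1 ≤ β.length ∧ β.length ≤ α.length ∧ (relRange Edge A β).Nonempty} ∨
    A ⊂ relRange Edge A α

/-- `β` is an irreducible path: not a repetition of a proper initial path. -/
def IrreduciblePath (β : List Λ) : Prop :=
  ∀ k : ℕ, 1 ≤ k → k < β.length → ∀ m : ℕ, β ≠ (List.replicate m (β.take k)).flatten

/-- The generalized vertex `[v]_l`. -/
def gvClass (Edge : V → Λ → V → Prop) (l : ℕ) (v : V) : Set V :=
  {w | ∀ β : List Λ, 1 ≤ β.length → β.length ≤ l → (v ∈ lrange Edge β ↔ w ∈ lrange Edge β)}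

/-- `s(x)`: sources of infinite paths labeled by `x`. -/
def srcInf (Edge : V → Λ → V → Prop) (x : ℕ → Λ) : Set V :=
  {w | ∃ p : ℕ → V, p 0 = w ∧ ∀ n : ℕ, Edge (p n) (x n) (p (n + 1))}


/-!
If a hereditary saturated `H` contains a nonempty `A` but misses some `B ∈ ℰ`, then every
`r(B, γ) ∉ H` is regular, since non-regular sets lie in `H(A) ⊆ H`; saturation then gives a
labeled path `α` with `r(B, γα) ∉ H`. Iterating yields an infinite word `x` with
`r(B, x_{[1,n]}) ∉ H` for all `n`. Strong cofinality covers some `r(x_{[1,N]})`, and hence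
`r(B, x_{[1,N]})`, by finitely many `r(A, λᵢ) ∈ H`, a contradiction.
-/

section RelRange

variable (Edge : V → Λ → V → Prop)

lemma relRange_append (S : Set V) (γ α : List Λ) :
    relRange Edge S (γ ++ α) = relRange Edge (relRange Edge S γ) α := by
  induction γ generalizing S with
  | nil => rfl
  | cons a γ ih => exact ih _

lemma relRange_mono {S T : Set V} (h : S ⊆ T) (α : List Λ) :
    relRange Edge S α ⊆ relRange Edge T α := by
  induction α generalizing S T with
  | nil => exact h
  | cons a α ih => exact ih fun w ⟨u, hu, he⟩ => ⟨u, h hu, he⟩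

lemma relRange_subset_lrange (S : Set V) (α : List Λ) : relRange Edge S α ⊆ lrange Edge α :=
  relRange_mono Edge (Set.subset_univ S) α

-- Along a nonempty word that is not a labeled path every relative range is empty.
lemma relRange_mem_of_forall_isLP {𝒮 : Set (Set V)} (h0 : ∅ ∈ 𝒮)
    (hLP : ∀ A ∈ 𝒮, ∀ α : List Λ, IsLP Edge α → relRange Edge A α ∈ 𝒮)
    {A : Set V} (hA : A ∈ 𝒮) (α : List Λ) : relRange Edge A α ∈ 𝒮 := by
  rcases eq_or_ne α [] with rfl | hα
  · exact hA
  by_cases hr : (lrange Edge α).Nonempty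
  · exact hLP A hA α ⟨hα, hr⟩
  · rwa [Set.not_nonempty_iff_eq_empty.1 fun h => hr (h.mono (relRange_subset_lrange Edge A α))]

end RelRange

namespace Hered

variable {Edge : V → Λ → V → Prop} {ℬ H : Set (Set V)}

lemma biUnion_mem (hH : Hered Edge ℬ H) (h0 : ∅ ∈ H) {ι : Type*} (l : List ι)
    {g : ι → Set V} (hg : ∀ i ∈ l, g i ∈ H) : (⋃ i ∈ l, g i) ∈ H := by
  induction l with
  | nil => simpa using h0
  | cons a l ih =>
    simp only [List.mem_cons, Set.iUnion_or, Set.iUnion_union_distrib, Set.iUnion_iUnion_eq_left]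
    exact hH.2.2.1 _ (hg a List.mem_cons_self) _ (ih fun i hi => hg i (List.mem_cons_of_mem a hi))

lemma biUnion_relRange_mem (hH : Hered Edge ℬ H) (h0 : ∅ ∈ H) {A : Set V} (hA : A ∈ H)
    (l : List (List Λ)) : (⋃ α ∈ l, relRange Edge A α) ∈ H :=
  hH.biUnion_mem h0 l fun α _ => relRange_mem_of_forall_isLP Edge h0 hH.2.1 hA α

lemma hSet_subset (hH : Hered Edge ℬ H) (h0 : ∅ ∈ H) {A : Set V} (hA : A ∈ H) :
    HSet Edge ℬ A ⊆ H := fun _ ⟨hB, l, _, hcov⟩ =>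
  hH.2.2.2 _ (hH.biUnion_relRange_mem h0 hA l) _ hB hcov

end Hered

lemma Satur.exists_isLP_relRange_not_mem {Edge : V → Λ → V → Prop} {ℬ H : Set (Set V)}
    (hS : Satur Edge ℬ H) {C : Set V} (hC : C ∈ ℬ) (hreg : RegularSet Edge ℬ C)
    (hCH : C ∉ H) : ∃ α : List Λ, IsLP Edge α ∧ relRange Edge C α ∉ H := by
  by_contra! h
  exact hCH (hS C hC hreg h)

lemma exists_prefix_chain {P : List Λ → Prop} (h0 : P [])
    (hstep : ∀ γ, P γ → ∃ α ≠ [], P (γ ++ α)) :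
    ∃ β : ℕ → List Λ, (∀ k, P (β k)) ∧ (∀ k, k ≤ (β k).length) ∧ ∀ k, β k <+: β (k + 1) := by
  choose f hf hPf using hstep
  let β : ℕ → {γ // P γ} := fun k =>
    Nat.rec ⟨[], h0⟩ (fun _ γ => ⟨γ.1 ++ f γ.1 γ.2, hPf _ _⟩) k
  have hlen : ∀ k, k ≤ (β k).1.length := by
    intro k
    induction k with
    | zero => exact Nat.zero_le _
    | succ k ih =>
      show k + 1 ≤ ((β k).1 ++ f (β k).1 (β k).2).length
      have := List.length_pos_iff.2 (hf (β k).1 (β k).2)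
      rw [List.length_append]
      omega
  exact ⟨fun k => (β k).1, fun k => (β k).2, hlen, fun k => ⟨_, rfl⟩⟩

lemma exists_word_of_prefix_chain {β : ℕ → List Λ} (hlen : ∀ k, k ≤ (β k).length)
    (hpre : ∀ k, β k <+: β (k + 1)) : ∃ x : ℕ → Λ, ∀ n, wordPrefix x n <+: β n := by
  have hmono : ∀ {j k}, j ≤ k → β j <+: β k := fun hjk =>
    Nat.le_induction List.prefix_rfl (fun _ _ ih => ih.trans (hpre _)) _ hjk
  refine ⟨fun n => (β (n + 1))[n]'(hlen (n + 1)), fun n => ?_⟩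
  rw [List.prefix_iff_eq_take]
  apply List.ext_getElem
  · simp [wordPrefix, hlen n]
  · intro i hi _
    simp only [wordPrefix, List.length_ofFn] at hi
    simp only [wordPrefix, List.getElem_ofFn, List.getElem_take]
    exact (hmono hi).getElem _

lemma exists_word_of_extensible {P : List Λ → Prop} (h0 : P [])
    (hstep : ∀ γ, P γ → ∃ α ≠ [], P (γ ++ α)) :
    ∃ x : ℕ → Λ, ∀ n, ∃ δ, P (wordPrefix x n ++ δ) := by
  obtain ⟨β, hP, hlen, hpre⟩ := exists_prefix_chain h0 hstep
  obtain ⟨x, hx⟩ := exists_word_of_prefix_chain hlen hpre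
  exact ⟨x, fun n => by obtain ⟨δ, hδ⟩ := hx n; exact ⟨δ, hδ ▸ hP n⟩⟩

theorem cofinal_and_singular_in_H_implies_minimal_general (Edge : V → Λ → V → Prop)
    (ℰ : Set (Set V)) (hsm : SmallestAccom Edge ℰ)
    (hcof : StrCofinal Edge ℰ)
    (hsing : ∀ A ∈ ℰ, A.Nonempty → ∀ B ∈ ℰ, ¬ RegularSet Edge ℰ B → B ∈ HSet Edge ℰ A) :
    MinimalLS Edge ℰ := by
  intro H hH hS
  obtain ⟨hacc, ⟨hℰ0, -⟩, -⟩ := hsm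
  refine or_iff_not_imp_left.2 fun hsub => hH.1.antisymm fun B hB => by_contra fun hBH => ?_
  obtain ⟨A, hAH, hA⟩ : ∃ A ∈ H, A.Nonempty := by
    simpa [Set.subset_singleton_iff, Set.nonempty_iff_ne_empty] using hsub
  have hH0 : ∅ ∈ H := hH.2.2.2 A hAH ∅ hℰ0 (Set.empty_subset A)
  have hstep : ∀ γ, relRange Edge B γ ∉ H → ∃ α ≠ [], relRange Edge B (γ ++ α) ∉ H := by
    intro γ hγ
    have hC := relRange_mem_of_forall_isLP Edge hℰ0 hacc.2.1 hB γ
    have hreg : RegularSet Edge ℰ (relRange Edge B γ) := by_contra fun h =>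
      hγ (hH.hSet_subset hH0 hAH (hsing A (hH.1 hAH) hA _ hC h))
    obtain ⟨α, hα, hαH⟩ := hS.exists_isLP_relRange_not_mem hC hreg hγ
    exact ⟨α, hα.1, by rwa [relRange_append]⟩
  obtain ⟨x, hx⟩ := exists_word_of_extensible hBH hstep
  have hxH : ∀ n, relRange Edge B (wordPrefix x n) ∉ H := fun n hn => by
    obtain ⟨δ, hδ⟩ := hx n
    exact hδ (by rw [relRange_append]; exact relRange_mem_of_forall_isLP Edge hH0 hH.2.1 hn δ)
  have hxinf : InfWord Edge x := fun n hn =>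
    ⟨by simpa [← List.length_eq_zero_iff, wordPrefix] using Nat.one_le_iff_ne_zero.1 hn,
      (Set.nonempty_iff_ne_empty.2 fun h : relRange Edge B _ = ∅ => hxH n (h ▸ hH0)).mono
        (relRange_subset_lrange ..)⟩
  obtain ⟨N, -, l, -, hcov⟩ := hcof A (hH.1 hAH) hA x hxinf
  exact hxH N (hH.2.2.2 _ (hH.biUnion_relRange_mem hH0 hAH l) _
    (relRange_mem_of_forall_isLP Edge hℰ0 hacc.2.1 hB _) ((relRange_subset_lrange ..).trans hcov))

/-- if the labeled space is strongly cofinal and every non-regular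
`B ∈ ℰ` lies in `H(A)` for every nonempty `A ∈ ℰ`, then the labeled space is minimal. -/
theorem cofinal_and_singular_in_H_implies_minimal (Edge : V → Λ → V → Prop)
    (ℰ : Set (Set V)) (hsm : SmallestAccom Edge ℰ) (hwlr : WLR Edge ℰ)
    (hcof : StrCofinal Edge ℰ)
    (hsing : ∀ A ∈ ℰ, A.Nonempty → ∀ B ∈ ℰ, ¬ RegularSet Edge ℰ B → B ∈ HSet Edge ℰ A) :
    MinimalLS Edge ℰ :=
  cofinal_and_singular_in_H_implies_minimal_general Edge ℰ hsm hcof hsing
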